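/- arXiv:math/0506576 — 2 statements merged into one kernel-verified Lean document; each statement's English description precedes it below -/
import Mathlib

section
/- Let γ = [[a,b],[c,d]] ∈ SL₂(ℝ) act on ℍ by γτ = (aτ+b)/(cτ+d). Let F, x : ℍ×ℍ → ℂ be holomorphic and nonvanishing, with x(γτ₁, τ₂) = x(τ₁, τ₂) and F(γτ₁, τ₂) = χ·(cτ₁+d)·F(τ₁,τ₂) for all (τ₁,τ₂) ∈ ℍ×ℍ, where χ ∈ ℂ∖{0} is a constant. Set G_{F,1} = (1/(2πi))·(∂F/∂τ₁)/F and G_{x,1} = (1/(2πi))·(∂x/∂τ₁)/x, and H = D_{q₁}G_{x,1} − 2·G_{F,1}·G_{x,1} where D_{q₁} = (1/(2πi))·∂/∂τ₁. Then H(γτ₁, τ₂) = (cτ₁+d)⁴·H(τ₁,τ₂) for all (τ₁,τ₂) ∈ ℍ×ℍ; that is, H transforms like a modular form of weight (4,0) with trivial character. -/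
/-!
Fix `τ₂` and write `j(z) = cz + d`, `γz = (az+b)/(cz+d)`. Since `γ'(z) = j(z)⁻²`, differentiating
`g(γz) = χ j(z)ᵏ g(z)` gives `g'(γz) = χ (k c j(z)ᵏ⁺¹ g(z) + j(z)ᵏ⁺² g'(z))`. Hence the logarithmic
derivative of a function of weight `k` satisfies `(log g)'(γz) = j(z)² (log g)'(z) + k c j(z)`: for
the invariant `x` it has weight 2, so `(log x)''(γz) = j⁴ (log x)'' + 2c j³ (log x)'`, while for `F`
it picks up the inhomogeneous term `c j`. In `H` the two error terms `2c j³ (log x)'` cancel.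
-/

open Complex

/-- `D_{q₁}t = (1/(2πi)) ∂t/∂τ₁`. -/
noncomputable def Dq1 (f : ℂ × ℂ → ℂ) : ℂ × ℂ → ℂ :=
  fun p => 1 / (2 * (Real.pi : ℂ) * Complex.I) * deriv (fun z => f (z, p.2)) p.1

/-- `G_{t,1} = (1/(2πi)) (∂t/∂τ₁)/t`. -/
noncomputable def Gq1 (x : ℂ × ℂ → ℂ) : ℂ × ℂ → ℂ :=
  fun p => 1 / (2 * (Real.pi : ℂ) * Complex.I) * deriv (fun z => x (z, p.2)) p.1 / x p

open Filter Topology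

section Moebius

variable {a b c d : ℝ}

theorem eventually_im_pos {z : ℂ} (hz : 0 < z.im) : ∀ᶠ w in 𝓝 z, 0 < w.im :=
  continuousAt_const.eventually_lt continuous_im.continuousAt hz

theorem moebius_denom_ne_zero (hdet : a * d - b * c = 1) {z : ℂ} (hz : 0 < z.im) :
    (c * z + d : ℂ) ≠ 0 := by
  intro h
  have hc : c = 0 := by
    have him : c * z.im = 0 := by simpa using congrArg Complex.im h
    exact (mul_eq_zero.1 him).resolve_right hz.ne'
  have hd : d = 0 := by simpa [hc] using congrArg Complex.re h
  simp [hc, hd] at hdet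

theorem im_moebius_pos (hdet : a * d - b * c = 1) {z : ℂ} (hz : 0 < z.im) :
    0 < ((a * z + b) / (c * z + d)).im := by
  have him : ((a * z + b) / (c * z + d)).im = z.im / normSq (c * z + d) := by
    rw [div_im, div_sub_div_same]
    congr 1
    simp only [add_im, add_re, mul_im, mul_re, ofReal_re, ofReal_im]
    linear_combination z.im * hdet
  rw [him]
  exact div_pos hz (normSq_pos.2 (moebius_denom_ne_zero hdet hz))

theorem hasDerivAt_affine (c d : ℝ) (z : ℂ) : HasDerivAt (fun w : ℂ => c * w + d) c z := by
  simpa using ((hasDerivAt_id z).const_mul (c : ℂ)).add_const (d : ℂ)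

theorem hasDerivAt_moebius (hdet : a * d - b * c = 1) {z : ℂ} (hj : (c * z + d : ℂ) ≠ 0) :
    HasDerivAt (fun w : ℂ => (a * w + b) / (c * w + d)) (1 / (c * z + d) ^ 2) z := by
  have hdetC : (a * d - b * c : ℂ) = 1 := by exact_mod_cast hdet
  have hnum_den : (a * (c * z + d) - (a * z + b) * c : ℂ) = 1 := by linear_combination hdetC
  simpa only [hnum_den] using (hasDerivAt_affine a b z).fun_div (hasDerivAt_affine c d z) hj

theorem deriv_moebius_of_weight (hdet : a * d - b * c = 1) {g : ℂ → ℂ} {χ : ℂ} {k : ℕ} {z : ℂ}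
    (hj : (c * z + d : ℂ) ≠ 0)
    (hg : ∀ᶠ w in 𝓝 z, g ((a * w + b) / (c * w + d)) = χ * (c * w + d) ^ k * g w)
    (hgz : DifferentiableAt ℂ g z) (hgγ : DifferentiableAt ℂ g ((a * z + b) / (c * z + d))) :
    deriv g ((a * z + b) / (c * z + d)) =
      χ * (k * c * (c * z + d) ^ (k + 1) * g z + (c * z + d) ^ (k + 2) * deriv g z) := by
  have hlhs := hgγ.hasDerivAt.comp z (hasDerivAt_moebius hdet hj)
  have hrhs := (((hasDerivAt_affine c d z).fun_pow k).const_mul χ).mul hgz.hasDerivAt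
  have key := hlhs.deriv.symm.trans ((EventuallyEq.deriv_eq hg).trans hrhs.deriv)
  rw [mul_one_div, div_eq_iff (pow_ne_zero 2 hj)] at key
  rw [key]
  rcases k with _ | k
  · simp only [CharP.cast_eq_zero]
    ring
  · simp only [Nat.add_sub_cancel]
    ring

theorem logDeriv_moebius_of_weight (hdet : a * d - b * c = 1) {g : ℂ → ℂ} {χ : ℂ} {k : ℕ}
    {z : ℂ} (hj : (c * z + d : ℂ) ≠ 0)
    (hg : ∀ᶠ w in 𝓝 z, g ((a * w + b) / (c * w + d)) = χ * (c * w + d) ^ k * g w)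
    (hgz : DifferentiableAt ℂ g z) (hgγ : DifferentiableAt ℂ g ((a * z + b) / (c * z + d)))
    (hgγ0 : g ((a * z + b) / (c * z + d)) ≠ 0) :
    logDeriv g ((a * z + b) / (c * z + d))
      = (c * z + d) ^ 2 * logDeriv g z + k * c * (c * z + d) := by
  have hgγz := hg.self_of_nhds
  rw [hgγz] at hgγ0
  obtain ⟨hχj, hgz0⟩ := mul_ne_zero_iff.1 hgγ0
  obtain ⟨hχ, -⟩ := mul_ne_zero_iff.1 hχj
  rw [logDeriv_apply, logDeriv_apply, deriv_moebius_of_weight hdet hj hg hgz hgγ, hgγz]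
  field_simp
  ring

theorem deriv_logDeriv_sub_two_mul_logDeriv_moebius (hdet : a * d - b * c = 1) {u f : ℂ → ℂ}
    {χ : ℂ} (hu : AnalyticOnNhd ℂ u {z | 0 < z.im}) (hf : AnalyticOnNhd ℂ f {z | 0 < z.im})
    (hu0 : ∀ z : ℂ, 0 < z.im → u z ≠ 0) (hf0 : ∀ z : ℂ, 0 < z.im → f z ≠ 0)
    (huinv : ∀ z : ℂ, 0 < z.im → u ((a * z + b) / (c * z + d)) = u z)
    (hfmod : ∀ z : ℂ, 0 < z.im → f ((a * z + b) / (c * z + d)) = χ * (c * z + d) * f z)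
    {τ : ℂ} (hτ : 0 < τ.im) :
    deriv (logDeriv u) ((a * τ + b) / (c * τ + d))
        - 2 * logDeriv f ((a * τ + b) / (c * τ + d)) * logDeriv u ((a * τ + b) / (c * τ + d))
      = (c * τ + d) ^ 4 * (deriv (logDeriv u) τ - 2 * logDeriv f τ * logDeriv u τ) := by
  have hτγ := im_moebius_pos hdet hτ
  have hlogu : ∀ z : ℂ, 0 < z.im → logDeriv u ((a * z + b) / (c * z + d))
      = (c * z + d) ^ 2 * logDeriv u z := fun z hz => by
    simpa using logDeriv_moebius_of_weight (k := 0) (χ := 1) hdet (moebius_denom_ne_zero hdet hz)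
      ((eventually_im_pos hz).mono fun w hw => by simpa using huinv w hw)
      (hu z hz).differentiableAt (hu _ (im_moebius_pos hdet hz)).differentiableAt
      (hu0 _ (im_moebius_pos hdet hz))
  have hlogf := logDeriv_moebius_of_weight (k := 1) hdet (moebius_denom_ne_zero hdet hτ)
    ((eventually_im_pos hτ).mono fun w hw => by simpa using hfmod w hw)
    (hf τ hτ).differentiableAt (hf _ hτγ).differentiableAt (hf0 _ hτγ)
  have hlogu_diff : ∀ z : ℂ, 0 < z.im → DifferentiableAt ℂ (logDeriv u) z := fun z hz =>
    (hu.deriv z hz).differentiableAt.div (hu z hz).differentiableAt (hu0 z hz)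
  have hderiv := deriv_moebius_of_weight (k := 2) (χ := 1) hdet (moebius_denom_ne_zero hdet hτ)
    ((eventually_im_pos hτ).mono fun w hw => by rw [hlogu w hw, one_mul])
    (hlogu_diff τ hτ) (hlogu_diff _ hτγ)
  rw [hderiv, hlogf, hlogu τ hτ]
  push_cast
  ring

end Moebius

theorem Gq1_apply (x : ℂ × ℂ → ℂ) (z w : ℂ) :
    Gq1 x (z, w) = (2 * Real.pi * I)⁻¹ * logDeriv (fun z => x (z, w)) z := by
  rw [Gq1, logDeriv_apply]
  ring

theorem Dq1_Gq1_sub_two_mul_Gq1_mul_Gq1 (F x : ℂ × ℂ → ℂ) (z w : ℂ) :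
    Dq1 (Gq1 x) (z, w) - 2 * Gq1 F (z, w) * Gq1 x (z, w)
      = (2 * Real.pi * I)⁻¹ ^ 2 * (deriv (logDeriv fun z => x (z, w)) z
          - 2 * logDeriv (fun z => F (z, w)) z * logDeriv (fun z => x (z, w)) z) := by
  simp only [Dq1, Gq1_apply, deriv_const_mul_field']
  ring

theorem stmt3_general (a b c d : ℝ) (hdet : a * d - b * c = 1)
    (F x : ℂ × ℂ → ℂ) (χ : ℂ)
    (hF : ∀ p : ℂ × ℂ, 0 < p.1.im → 0 < p.2.im → AnalyticAt ℂ F p)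
    (hx : ∀ p : ℂ × ℂ, 0 < p.1.im → 0 < p.2.im → AnalyticAt ℂ x p)
    (hFne : ∀ p : ℂ × ℂ, 0 < p.1.im → 0 < p.2.im → F p ≠ 0)
    (hxne : ∀ p : ℂ × ℂ, 0 < p.1.im → 0 < p.2.im → x p ≠ 0)
    (hxinv : ∀ τ₁ τ₂ : ℂ, 0 < τ₁.im → 0 < τ₂.im →
      x (((a : ℂ) * τ₁ + (b : ℂ)) / ((c : ℂ) * τ₁ + (d : ℂ)), τ₂) = x (τ₁, τ₂))
    (hFmod : ∀ τ₁ τ₂ : ℂ, 0 < τ₁.im → 0 < τ₂.im →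
      F (((a : ℂ) * τ₁ + (b : ℂ)) / ((c : ℂ) * τ₁ + (d : ℂ)), τ₂)
        = χ * ((c : ℂ) * τ₁ + (d : ℂ)) * F (τ₁, τ₂)) :
    ∀ τ₁ τ₂ : ℂ, 0 < τ₁.im → 0 < τ₂.im →
      (Dq1 (Gq1 x) (((a : ℂ) * τ₁ + (b : ℂ)) / ((c : ℂ) * τ₁ + (d : ℂ)), τ₂)
        - 2 * Gq1 F (((a : ℂ) * τ₁ + (b : ℂ)) / ((c : ℂ) * τ₁ + (d : ℂ)), τ₂)
            * Gq1 x (((a : ℂ) * τ₁ + (b : ℂ)) / ((c : ℂ) * τ₁ + (d : ℂ)), τ₂))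
      = ((c : ℂ) * τ₁ + (d : ℂ)) ^ 4 *
        (Dq1 (Gq1 x) (τ₁, τ₂) - 2 * Gq1 F (τ₁, τ₂) * Gq1 x (τ₁, τ₂)) := by
  intro τ₁ τ₂ h₁ h₂
  rw [Dq1_Gq1_sub_two_mul_Gq1_mul_Gq1, Dq1_Gq1_sub_two_mul_Gq1_mul_Gq1,
    deriv_logDeriv_sub_two_mul_logDeriv_moebius hdet
      (fun z hz => (hx (z, τ₂) hz h₂).curry_left) (fun z hz => (hF (z, τ₂) hz h₂).curry_left)
      (fun z hz => hxne (z, τ₂) hz h₂) (fun z hz => hFne (z, τ₂) hz h₂)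
      (fun z hz => hxinv z τ₂ hz h₂) (fun z hz => hFmod z τ₂ hz h₂) h₁]
  ring

theorem stmt3 (a b c d : ℝ) (hdet : a * d - b * c = 1)
    (F x : ℂ × ℂ → ℂ) (χ : ℂ) (hχ : χ ≠ 0)
    (hF : ∀ p : ℂ × ℂ, 0 < p.1.im → 0 < p.2.im → AnalyticAt ℂ F p)
    (hx : ∀ p : ℂ × ℂ, 0 < p.1.im → 0 < p.2.im → AnalyticAt ℂ x p)
    (hFne : ∀ p : ℂ × ℂ, 0 < p.1.im → 0 < p.2.im → F p ≠ 0)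
    (hxne : ∀ p : ℂ × ℂ, 0 < p.1.im → 0 < p.2.im → x p ≠ 0)
    (hxinv : ∀ τ₁ τ₂ : ℂ, 0 < τ₁.im → 0 < τ₂.im →
      x (((a : ℂ) * τ₁ + (b : ℂ)) / ((c : ℂ) * τ₁ + (d : ℂ)), τ₂) = x (τ₁, τ₂))
    (hFmod : ∀ τ₁ τ₂ : ℂ, 0 < τ₁.im → 0 < τ₂.im →
      F (((a : ℂ) * τ₁ + (b : ℂ)) / ((c : ℂ) * τ₁ + (d : ℂ)), τ₂)
        = χ * ((c : ℂ) * τ₁ + (d : ℂ)) * F (τ₁, τ₂)) :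
    ∀ τ₁ τ₂ : ℂ, 0 < τ₁.im → 0 < τ₂.im →
      (Dq1 (Gq1 x) (((a : ℂ) * τ₁ + (b : ℂ)) / ((c : ℂ) * τ₁ + (d : ℂ)), τ₂)
        - 2 * Gq1 F (((a : ℂ) * τ₁ + (b : ℂ)) / ((c : ℂ) * τ₁ + (d : ℂ)), τ₂)
            * Gq1 x (((a : ℂ) * τ₁ + (b : ℂ)) / ((c : ℂ) * τ₁ + (d : ℂ)), τ₂))
      = ((c : ℂ) * τ₁ + (d : ℂ)) ^ 4 *
        (Dq1 (Gq1 x) (τ₁, τ₂) - 2 * Gq1 F (τ₁, τ₂) * Gq1 x (τ₁, τ₂)) :=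
  stmt3_general a b c d hdet F x χ hF hx hFne hxne hxinv hFmod
end

section
/- Let γ = [[a,b],[c,d]] ∈ SL₂(ℝ) act on ℍ by γτ = (aτ+b)/(cτ+d). Let F : ℍ×ℍ → ℂ be holomorphic and nonvanishing with F(γτ₁, τ₂) = χ·(cτ₁+d)·F(τ₁,τ₂) for all (τ₁,τ₂) ∈ ℍ×ℍ, where χ ∈ ℂ∖{0} is a constant. Set G_{F,1} = (1/(2πi))·(∂F/∂τ₁)/F and H = D_{q₁}G_{F,1} − G_{F,1}², where D_{q₁} = (1/(2πi))·∂/∂τ₁. Then H(γτ₁, τ₂) = (cτ₁+d)⁴·H(τ₁,τ₂) for all (τ₁,τ₂) ∈ ℍ×ℍ; that is, H transforms like a modular form of weight (4,0) with trivial character. -/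
/-!
Write `j(τ) = cτ + d`, `γτ = (aτ + b)/(cτ + d)` and `f = F(·, τ₂)`. Differentiating
`f(γτ) = χ j(τ) f(τ)` with `γ'(τ) = j(τ)⁻²` shows that `ℓ = f'/f` is quasimodular of weight 2:
`ℓ(γτ) = c j(τ) + j(τ)² ℓ(τ)`. Differentiating once more gives
`ℓ'(γτ) = j² (c² + 2c j ℓ + j² ℓ')`, and in `ℓ' - ℓ²` the terms `c² j²` and `2c j³ ℓ`
cancel, leaving `j⁴ (ℓ' - ℓ²)`. Finally `H = (2πi)⁻² (ℓ' - ℓ²)`.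
-/

open Complex

open Filter Topology
open UpperHalfPlane (isOpen_upperHalfPlaneSet linear_ne_zero_of_im)

section Mobius

variable {𝕜 : Type*} [NontriviallyNormedField 𝕜] {a b c d : 𝕜}

theorem hasDerivAt_mobius {z : 𝕜} (hz : c * z + d ≠ 0) :
    HasDerivAt (fun w => (a * w + b) / (c * w + d)) ((a * d - b * c) / (c * z + d) ^ 2) z := by
  have hnum : HasDerivAt (fun w => a * w + b) a z := by
    simpa using ((hasDerivAt_id z).const_mul a).add_const b
  have hden : HasDerivAt (fun w => c * w + d) c z := by
    simpa using ((hasDerivAt_id z).const_mul c).add_const d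
  exact (hnum.fun_div hden hz).congr_deriv (by ring)

theorem deriv_mobius_eq_of_eventuallyEq {g h : 𝕜 → 𝕜} {h' z : 𝕜} (hdet : a * d - b * c = 1)
    (hz : c * z + d ≠ 0) (hg : DifferentiableAt 𝕜 g ((a * z + b) / (c * z + d)))
    (hh : HasDerivAt h h' z)
    (hgh : (fun w => g ((a * w + b) / (c * w + d))) =ᶠ[𝓝 z] h) :
    deriv g ((a * z + b) / (c * z + d)) = (c * z + d) ^ 2 * h' := by
  have hcomp := hg.hasDerivAt.comp z (hasDerivAt_mobius (a := a) (b := b) hz)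
  have hunique := (hcomp.congr_of_eventuallyEq hgh.symm).unique hh
  rw [← hunique, hdet, mul_one_div, mul_div_cancel₀ _ (pow_ne_zero 2 hz)]

theorem logDeriv_mobius_of_eventuallyEq {f : 𝕜 → 𝕜} {χ z : 𝕜} (hdet : a * d - b * c = 1)
    (hz : c * z + d ≠ 0) (hfγ : DifferentiableAt 𝕜 f ((a * z + b) / (c * z + d)))
    (hf : DifferentiableAt 𝕜 f z) (hfγ0 : f ((a * z + b) / (c * z + d)) ≠ 0)
    (hmod : (fun w => f ((a * w + b) / (c * w + d))) =ᶠ[𝓝 z] fun w => χ * (c * w + d) * f w) :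
    logDeriv f ((a * z + b) / (c * z + d)) = c * (c * z + d) + (c * z + d) ^ 2 * logDeriv f z := by
  have hfac : HasDerivAt (fun w => χ * (c * w + d)) (χ * c) z := by
    simpa using (((hasDerivAt_id z).const_mul c).add_const d).const_mul χ
  have hderiv := deriv_mobius_eq_of_eventuallyEq hdet hz hfγ (hfac.mul hf.hasDerivAt) hmod
  have hval : f ((a * z + b) / (c * z + d)) = χ * (c * z + d) * f z := hmod.eq_of_nhds
  have hχ : χ ≠ 0 := by rintro rfl; simp [hval] at hfγ0
  have hfz : f z ≠ 0 := by rintro hfz; simp [hval, hfz] at hfγ0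
  rw [logDeriv_apply, logDeriv_apply, hderiv, hval]
  field_simp

theorem deriv_sub_sq_mobius_of_eventuallyEq {l : 𝕜 → 𝕜} {z : 𝕜} (hdet : a * d - b * c = 1)
    (hz : c * z + d ≠ 0) (hlγ : DifferentiableAt 𝕜 l ((a * z + b) / (c * z + d)))
    (hl : DifferentiableAt 𝕜 l z)
    (hmod : (fun w => l ((a * w + b) / (c * w + d))) =ᶠ[𝓝 z]
      fun w => c * (c * w + d) + (c * w + d) ^ 2 * l w) :
    deriv l ((a * z + b) / (c * z + d)) - l ((a * z + b) / (c * z + d)) ^ 2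
      = (c * z + d) ^ 4 * (deriv l z - l z ^ 2) := by
  have hj : HasDerivAt (fun w => c * w + d) c z := by
    simpa using ((hasDerivAt_id z).const_mul c).add_const d
  have hrhs := (hj.const_mul c).fun_add ((hj.fun_pow 2).fun_mul hl.hasDerivAt)
  rw [deriv_mobius_eq_of_eventuallyEq hdet hz hlγ hrhs hmod, hmod.eq_of_nhds]
  simp only [Nat.cast_ofNat, Nat.add_one_sub_one, pow_one]
  ring

end Mobius

section UpperHalfPlane

variable {a b c d : ℝ} {z : ℂ}

theorem ne_zero_or_ne_zero_of_det_ne_zero (hdet : a * d - b * c ≠ 0) : c ≠ 0 ∨ d ≠ 0 := by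
  by_contra! h
  simp [h.1, h.2] at hdet

theorem mobius_denom_ne_zero (hcd : c ≠ 0 ∨ d ≠ 0) (hz : 0 < z.im) :
    (c : ℂ) * z + d ≠ 0 := by
  simpa using linear_ne_zero_of_im (cd := ![c, d]) hz.ne'
    fun h => hcd.elim (· (congrFun h 0)) (· (congrFun h 1))

theorem im_mobius : (((a : ℂ) * z + b) / ((c : ℂ) * z + d)).im
    = (a * d - b * c) * z.im / normSq ((c : ℂ) * z + d) := by
  rw [div_im, div_sub_div_same]
  congr 1
  simp only [add_im, add_re, mul_im, mul_re, ofReal_re, ofReal_im]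
  ring

theorem mobius_im_pos (hdet : 0 < a * d - b * c) (hz : 0 < z.im) :
    0 < (((a : ℂ) * z + b) / ((c : ℂ) * z + d)).im := by
  rw [im_mobius]
  have := normSq_pos.mpr (mobius_denom_ne_zero (ne_zero_or_ne_zero_of_det_ne_zero hdet.ne') hz)
  positivity

end UpperHalfPlane

theorem Dq1_Gq1_sub_sq (F : ℂ × ℂ → ℂ) (p : ℂ × ℂ) :
    Dq1 (Gq1 F) p - Gq1 F p ^ 2 = (1 / (2 * (Real.pi : ℂ) * I)) ^ 2 *
      (deriv (logDeriv fun z => F (z, p.2)) p.1 - logDeriv (fun z => F (z, p.2)) p.1 ^ 2) := by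
  have hG : (fun z => Gq1 F (z, p.2))
      = fun z => 1 / (2 * (Real.pi : ℂ) * I) * logDeriv (fun z => F (z, p.2)) z := by
    funext z
    simp only [Gq1, logDeriv_apply, mul_div_assoc]
  simp only [Dq1, hG, deriv_const_mul_field']
  simp only [Gq1, logDeriv_apply, mul_div_assoc]
  ring

theorem stmt4_general (a b c d : ℝ) (hdet : a * d - b * c = 1)
    (F : ℂ × ℂ → ℂ) (χ : ℂ)
    (hF : ∀ p : ℂ × ℂ, 0 < p.1.im → 0 < p.2.im → AnalyticAt ℂ F p)
    (hFne : ∀ p : ℂ × ℂ, 0 < p.1.im → 0 < p.2.im → F p ≠ 0)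
    (hFmod : ∀ τ₁ τ₂ : ℂ, 0 < τ₁.im → 0 < τ₂.im →
      F (((a : ℂ) * τ₁ + (b : ℂ)) / ((c : ℂ) * τ₁ + (d : ℂ)), τ₂)
        = χ * ((c : ℂ) * τ₁ + (d : ℂ)) * F (τ₁, τ₂)) :
    ∀ τ₁ τ₂ : ℂ, 0 < τ₁.im → 0 < τ₂.im →
      (Dq1 (Gq1 F) (((a : ℂ) * τ₁ + (b : ℂ)) / ((c : ℂ) * τ₁ + (d : ℂ)), τ₂)
        - (Gq1 F (((a : ℂ) * τ₁ + (b : ℂ)) / ((c : ℂ) * τ₁ + (d : ℂ)), τ₂)) ^ 2)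
      = ((c : ℂ) * τ₁ + (d : ℂ)) ^ 4 *
        (Dq1 (Gq1 F) (τ₁, τ₂) - (Gq1 F (τ₁, τ₂)) ^ 2) := by
  intro τ₁ τ₂ h₁ h₂
  have hdetC : (a : ℂ) * d - b * c = 1 := by exact_mod_cast hdet
  have hγ : ∀ w : ℂ, 0 < w.im → 0 < (((a : ℂ) * w + b) / ((c : ℂ) * w + d)).im :=
    fun w => mobius_im_pos (hdet ▸ one_pos)
  have hj : ∀ w : ℂ, 0 < w.im → (c : ℂ) * w + d ≠ 0 := fun w =>
    mobius_denom_ne_zero (ne_zero_or_ne_zero_of_det_ne_zero (hdet ▸ one_ne_zero))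
  set f : ℂ → ℂ := fun z => F (z, τ₂)
  have hf : ∀ w : ℂ, 0 < w.im → AnalyticAt ℂ f w := fun w hw =>
    (hF (w, τ₂) hw h₂).comp₂ analyticAt_id analyticAt_const
  have hl : ∀ w : ℂ, 0 < w.im → DifferentiableAt ℂ (logDeriv f) w := fun w hw =>
    ((hf w hw).deriv.div (hf w hw) (hFne (w, τ₂) hw h₂)).differentiableAt
  have hlmod : ∀ w : ℂ, 0 < w.im → logDeriv f (((a : ℂ) * w + b) / ((c : ℂ) * w + d))
      = c * (c * w + d) + (c * w + d) ^ 2 * logDeriv f w := fun w hw =>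
    logDeriv_mobius_of_eventuallyEq hdetC (hj w hw) (hf _ (hγ w hw)).differentiableAt
      (hf w hw).differentiableAt (hFne _ (hγ w hw) h₂)
      (eventually_of_mem (isOpen_upperHalfPlaneSet.mem_nhds hw) fun v hv =>
        hFmod v τ₂ hv h₂)
  rw [Dq1_Gq1_sub_sq, Dq1_Gq1_sub_sq, deriv_sub_sq_mobius_of_eventuallyEq hdetC (hj τ₁ h₁)
    (hl _ (hγ τ₁ h₁)) (hl τ₁ h₁) (eventually_of_mem (isOpen_upperHalfPlaneSet.mem_nhds h₁) hlmod)]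
  ring

theorem stmt4 (a b c d : ℝ) (hdet : a * d - b * c = 1)
    (F : ℂ × ℂ → ℂ) (χ : ℂ) (hχ : χ ≠ 0)
    (hF : ∀ p : ℂ × ℂ, 0 < p.1.im → 0 < p.2.im → AnalyticAt ℂ F p)
    (hFne : ∀ p : ℂ × ℂ, 0 < p.1.im → 0 < p.2.im → F p ≠ 0)
    (hFmod : ∀ τ₁ τ₂ : ℂ, 0 < τ₁.im → 0 < τ₂.im →
      F (((a : ℂ) * τ₁ + (b : ℂ)) / ((c : ℂ) * τ₁ + (d : ℂ)), τ₂)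
        = χ * ((c : ℂ) * τ₁ + (d : ℂ)) * F (τ₁, τ₂)) :
    ∀ τ₁ τ₂ : ℂ, 0 < τ₁.im → 0 < τ₂.im →
      (Dq1 (Gq1 F) (((a : ℂ) * τ₁ + (b : ℂ)) / ((c : ℂ) * τ₁ + (d : ℂ)), τ₂)
        - (Gq1 F (((a : ℂ) * τ₁ + (b : ℂ)) / ((c : ℂ) * τ₁ + (d : ℂ)), τ₂)) ^ 2)
      = ((c : ℂ) * τ₁ + (d : ℂ)) ^ 4 *
        (Dq1 (Gq1 F) (τ₁, τ₂) - (Gq1 F (τ₁, τ₂)) ^ 2) :=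
  stmt4_general a b c d hdet F χ hF hFne hFmod
end
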